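/- Let C be the k×k lower-triangular matrix with c_{i,i}=1 and c_{i,j} = binom(2i, i−j) − binom(2i, i−j−1) for j<i. Then C is the Jacobian matrix at the point (1,...,1) of the map ψ_k^{−1}:(0,∞)^k→ℝ^k sending (z_1,...,z_k) to the moment vector (m_1,...,m_k) defined by the Skibinsky recursion; that is, ∂m_i/∂z_r evaluated at z_1=⋯=z_k=1 equals binom(2i, i−r) − binom(2i, i−r−1) for 1≤r≤i, and equals 0 for r>i. -/

import Mathlib

/-- Binomial coefficient `n` choose `k` with the convention that it vanishes for `k < 0`,
taking values in `ℤ`. -/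
def ichoose (n : ℕ) (k : ℤ) : ℤ := if k < 0 then 0 else n.choose k.toNat

/-!
At `z = (1,…,1)` the Skibinsky recursion is Pascal's rule, so `g i j` takes the ballot number
`C(i+j, i) - C(i+j, i-1)` there. Differentiating the recursion in `z r` gives
`∂g(i+1,j+1) = ∂g(i+1,j) + ∂g(i,j+1) + [j-i+1 = r] g(i,j+1)(1)`, and Pascal's rule shows that
`C(i+j, min(i-1, j-r)) - C(i+j, i-r-1)` solves it. Both closed forms have the right values in
row `0` and vanish on the subdiagonal `j = i - 1`, so an induction over the region `i ≤ j + 1`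
identifies them with the values and derivatives of `g`; on the diagonal the second one is the
claimed Jacobian entry.
-/

lemma ichoose_of_neg (n : ℕ) {k : ℤ} (hk : k < 0) : ichoose n k = 0 := if_pos hk

lemma ichoose_natCast (n k : ℕ) : ichoose n k = n.choose k := by
  simp [ichoose]

lemma ichoose_succ (n : ℕ) (k : ℤ) : ichoose (n + 1) k = ichoose n k + ichoose n (k - 1) := by
  obtain hk | ⟨k, rfl⟩ := lt_or_ge k 0 |>.imp_right Int.eq_ofNat_of_zero_le
  · simp [ichoose_of_neg _ hk, ichoose_of_neg _ (show k - 1 < 0 by omega)]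
  · cases k with
    | zero => simp [ichoose]
    | succ k =>
      rw [show ((k + 1 : ℕ) : ℤ) - 1 = k by omega, ichoose_natCast, ichoose_natCast,
        ichoose_natCast, Nat.choose_succ_succ', Nat.cast_add, add_comm]

def ballot (i j : ℕ) : ℤ := ichoose (i + j) i - ichoose (i + j) ((i : ℤ) - 1)

-- The partial derivative `∂ g i j / ∂ z r` at `(1,…,1)`.
def ballotDeriv (r i j : ℕ) : ℤ :=
  ichoose (i + j) (min ((i : ℤ) - 1) ((j : ℤ) - r)) - ichoose (i + j) ((i : ℤ) - r - 1)

lemma ballot_zero_left (j : ℕ) : ballot 0 j = 1 := by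
  simp [ballot, ichoose]

lemma ballot_succ_self (i : ℕ) : ballot (i + 1) i = 0 := by
  rw [ballot, show ((i + 1 : ℕ) : ℤ) - 1 = i by omega, show i + 1 + i = 2 * i + 1 by ring,
    ichoose_natCast, ichoose_natCast, Nat.choose_symm_half, sub_self]

lemma ballot_succ_succ (i j : ℕ) :
    ballot (i + 1) (j + 1) = ballot (i + 1) j + ballot i (j + 1) := by
  simp only [ballot, show i + 1 + (j + 1) = i + j + 1 + 1 by ring,
    show i + 1 + j = i + j + 1 by ring, show i + (j + 1) = i + j + 1 by ring,
    ichoose_succ (i + j + 1)]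
  push_cast
  ring_nf

lemma ballotDeriv_zero_left (r j : ℕ) : ballotDeriv r 0 j = 0 := by
  rw [ballotDeriv, ichoose_of_neg _ (by omega), ichoose_of_neg _ (by omega), sub_self]

lemma ballotDeriv_succ_self (r i : ℕ) : ballotDeriv r (i + 1) i = 0 := by
  rw [ballotDeriv, min_eq_right (by omega)]
  push_cast
  ring_nf

lemma ballotDeriv_self {r : ℕ} (hr : 1 ≤ r) (i : ℕ) :
    ballotDeriv r i i = ichoose (2 * i) ((i : ℤ) - r) - ichoose (2 * i) ((i : ℤ) - r - 1) := by
  rw [ballotDeriv, min_eq_right (by omega), two_mul]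

lemma ballotDeriv_succ_succ (r : ℕ) {i j : ℕ} (hij : i ≤ j) :
    ballotDeriv r (i + 1) (j + 1) =
      ballotDeriv r (i + 1) j + ballotDeriv r i (j + 1) +
        if j - i + 1 = r then ballot i (j + 1) else 0 := by
  simp only [ballotDeriv, ballot, show i + 1 + (j + 1) = i + j + 1 + 1 by ring,
    show i + 1 + j = i + j + 1 by ring, show i + (j + 1) = i + j + 1 by ring,
    ichoose_succ (i + j + 1)]
  push_cast
  rcases lt_trichotomy ((j : ℤ) + 1 - r) i with h | h | h
  · rw [if_neg (by omega), min_eq_right (by omega), min_eq_right (by omega),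
      min_eq_right (by omega)]
    ring_nf
  · rw [if_pos (by omega), min_eq_left (by omega), min_eq_right (by omega), min_eq_left (by omega),
      show (r : ℤ) = j + 1 - i by omega]
    ring_nf
  · rw [if_neg (by omega), min_eq_left (by omega), min_eq_left (by omega),
      min_eq_left (by omega)]
    ring_nf

lemma hasDerivAt_update_apply {𝕜 ι : Type*} [NontriviallyNormedField 𝕜] [DecidableEq ι]
    (x : ι → 𝕜) (r k : ι) (y : 𝕜) :
    HasDerivAt (fun t => Function.update x r t k) (if k = r then 1 else 0) y := by
  by_cases hk : k = r
  · subst hk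
    simpa using hasDerivAt_id' y
  · simpa [Function.update_of_ne hk, hk] using hasDerivAt_const y (x k)

theorem induction_of_le_add_one {P : ℕ → ℕ → Prop} (zero_left : ∀ j, P 0 j)
    (succ_self : ∀ i, P (i + 1) i)
    (succ_succ : ∀ i j, i ≤ j → P (i + 1) j → P i (j + 1) → P (i + 1) (j + 1)) :
    ∀ i j, i ≤ j + 1 → P i j := by
  intro i
  induction i with
  | zero => exact fun j _ => zero_left j
  | succ i ih =>
    intro j hij
    induction j with
    | zero =>
      obtain rfl : i = 0 := by omega
      exact succ_self 0
    | succ j ihj =>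
      rcases (show i ≤ j ∨ i = j + 1 by omega) with hij | rfl
      · exact succ_succ i j hij (ihj (by omega)) (ih (j + 1) (by omega))
      · exact succ_self (j + 1)

structure IsSkibinskyArray (g : ℕ → ℕ → (ℕ → ℝ) → ℝ) : Prop where
  eq_zero_of_lt : ∀ i j z, j < i → g i j z = 0
  zero_left : ∀ j z, g 0 j z = 1
  recursion : ∀ i j : ℕ, ∀ z : ℕ → ℝ, 1 ≤ i → i ≤ j →
    g i j z = g i (j - 1) z + z (j - i + 1) * g (i - 1) j z

namespace IsSkibinskyArray

variable {g : ℕ → ℕ → (ℕ → ℝ) → ℝ}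

lemma succ_succ (hg : IsSkibinskyArray g) {i j : ℕ} (hij : i ≤ j) (z : ℕ → ℝ) :
    g (i + 1) (j + 1) z = g (i + 1) j z + z (j - i + 1) * g i (j + 1) z := by
  simpa using hg.recursion (i + 1) (j + 1) z (by omega) (by omega)

lemma apply_one (hg : IsSkibinskyArray g) :
    ∀ i j, i ≤ j + 1 → g i j (fun _ => 1) = ballot i j := by
  refine induction_of_le_add_one (fun j => ?_) (fun i => ?_) (fun i j hij h₁ h₂ => ?_)
  · simp [hg.zero_left, ballot_zero_left]
  · simp [hg.eq_zero_of_lt, ballot_succ_self]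
  · rw [hg.succ_succ hij, h₁, h₂, ballot_succ_succ]
    push_cast
    ring

lemma hasDerivAt_update_one (hg : IsSkibinskyArray g) (r : ℕ) :
    ∀ i j, i ≤ j + 1 →
      HasDerivAt (fun t => g i j (Function.update (fun _ => (1 : ℝ)) r t))
        (ballotDeriv r i j) 1 := by
  refine induction_of_le_add_one (fun j => ?_) (fun i => ?_) (fun i j hij h₁ h₂ => ?_)
  · simpa [hg.zero_left, ballotDeriv_zero_left] using hasDerivAt_const (1 : ℝ) (1 : ℝ)
  · simpa [hg.eq_zero_of_lt, ballotDeriv_succ_self] using hasDerivAt_const (1 : ℝ) (0 : ℝ)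
  · simp only [hg.succ_succ hij]
    have h_coord := hasDerivAt_update_apply (fun _ => (1 : ℝ)) r (j - i + 1) 1
    refine (h₁.add (h_coord.mul h₂)).congr_deriv ?_
    rw [Function.update_eq_self, hg.apply_one i (j + 1) (by omega), ballotDeriv_succ_succ r hij]
    split_ifs <;> push_cast <;> ring

end IsSkibinskyArray

/-- Let `g` be the Skibinsky array with recursion variables `z`
(`g i j z = 0` for `i > j`, `g 0 j z = 1`,
`g i j z = g i (j-1) z + z (j-i+1) * g (i-1) j z` for `1 ≤ i ≤ j`) and `m i = g i i` the
`i`-th moment of the map `ψ⁻¹`. Then the Jacobian matrix of `ψ⁻¹` at the point `(1,…,1)` is the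
lower-triangular matrix `C` with entries
`∂ m_i / ∂ z_r (1,…,1) = binom (2i) (i-r) - binom (2i) (i-r-1)` for `1 ≤ r ≤ i`
and `0` for `r > i` (where `binom (n) (k) = 0` for `k < 0`, so the formula covers both cases). -/
theorem stmt_17 (g : ℕ → ℕ → (ℕ → ℝ) → ℝ)
    (h_zero : ∀ i j z, j < i → g i j z = 0)
    (h_top : ∀ j z, g 0 j z = 1)
    (h_rec : ∀ i j : ℕ, ∀ z : ℕ → ℝ, 1 ≤ i → i ≤ j →
      g i j z = g i (j - 1) z + z (j - i + 1) * g (i - 1) j z) :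
    ∀ i r : ℕ, 1 ≤ r →
      HasDerivAt (fun t => g i i (Function.update (fun _ => (1 : ℝ)) r t))
        ((ichoose (2 * i) ((i : ℤ) - r) - ichoose (2 * i) ((i : ℤ) - r - 1) : ℤ) : ℝ) 1 := by
  intro i r hr
  rw [← ballotDeriv_self hr]
  exact (IsSkibinskyArray.mk h_zero h_top h_rec).hasDerivAt_update_one r i i (by omega)
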